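/- arXiv:1511.09018 — 3 statements merged into one kernel-verified Lean document; each statement's English description precedes it below -/
import Mathlib

section
/- Let ω be an even Dirichlet character modulo 4N with N not divisible by 4, and write ω = ω₂ · χ with χ a character modulo the odd part N₂ of N and ω₂ a character modulo 8. Then ω is trivial on Γ₀(4N) ∩ Γ₁(4N₂) (acting via the lower-right entry) if and only if the conductor of ω₂ divides 4. -/
open CongruenceSubgroup
open scoped MatrixGroups

lemma conductor_dvd_four_iff (ω₂ : DirichletCharacter ℂ 8) :
    ω₂.conductor ∣ 4 ↔ ω₂ (5 : ZMod 8) = 1 := by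
  constructor
  · intro hc
    obtain ⟨h8, χ₀, hχ₀⟩ := ω₂.factorsThrough_conductor
    have hu : IsUnit (5 : ZMod 8) := by decide
    rw [hχ₀, ← hu.unit_spec, DirichletCharacter.changeLevel_eq_cast_of_dvd χ₀ h8 hu.unit,
      hu.unit_spec]
    have : (ZMod.cast (5 : ZMod 8) : ZMod ω₂.conductor) = 1 := by
      have : (5 : ZMod 8) = ((5 : ℕ) : ZMod 8) := by norm_num
      rw [this, ← ZMod.castHom_apply (m := ω₂.conductor) (h := h8), map_natCast]
      have : (5 : ℕ) ≡ 1 [MOD ω₂.conductor] :=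
        ((Nat.modEq_iff_dvd' (by norm_num)).mpr (by simpa using hc)).symm
      calc ((5:ℕ) : ZMod ω₂.conductor) = ((1:ℕ) : ZMod ω₂.conductor) :=
        (ZMod.natCast_eq_natCast_iff _ _ _).mpr this
      _ = 1 := by norm_num
    rw [this, map_one]
  · intro h5
    have hft : ω₂.FactorsThrough 4 := by
      rw [DirichletCharacter.factorsThrough_iff_ker_unitsMap (by norm_num : (4:ℕ) ∣ 8)]
      intro x hx
      rw [MonoidHom.mem_ker] at hx ⊢
      have hx' : (x : ZMod 8) = 1 ∨ (x : ZMod 8) = 5 := by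
        revert hx; revert x; decide
      ext
      rw [MulChar.coe_toUnitHom]
      rcases hx' with h | h <;> rw [h]
      · exact map_one ω₂
      · exact h5
    have hle : ω₂.conductor ≤ 4 := Nat.sInf_le hft
    have h8 : ω₂.conductor ∣ 8 := ω₂.conductor_dvd_level
    interval_cases h : ω₂.conductor <;> omega

/-- Let `ω` be an even Dirichlet character modulo `4N` with `4 ∤ N`, factored as `ω₂ ⋅ χ` with
`χ` modulo the odd part `N₂` of `N` and `ω₂` modulo 8. Then `ω` is trivial on
`Γ₀(4N) ∩ Γ₁(4N₂)` (acting via the lower-right entry) iff the conductor of `ω₂` divides 4. -/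
theorem even_character_trivial_iff (N N₂ : ℕ) (hN : 0 < N) (h4 : ¬ 4 ∣ N)
    (hodd : Odd N₂) (hdvd : N₂ ∣ N) (hmax : ∀ m : ℕ, Odd m → m ∣ N → m ∣ N₂)
    (ω : DirichletCharacter ℂ (4 * N)) (hω : ω (-1) = 1)
    (ω₂ : DirichletCharacter ℂ 8) (χ : DirichletCharacter ℂ N₂)
    (hfact : ∀ d : ℤ, ω (d : ZMod (4 * N)) = ω₂ (d : ZMod 8) * χ (d : ZMod N₂)) :
    (∀ A : SL(2, ℤ), A ∈ Gamma0 (4 * N) ⊓ Gamma1 (4 * N₂) →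
        ω ((A 1 1 : ℤ) : ZMod (4 * N)) = 1) ↔
      ω₂.conductor ∣ 4 := by
  rw [conductor_dvd_four_iff]
  have hN₂pos : 0 < N₂ := Nat.pos_of_dvd_of_pos hdvd hN
  -- `N` is `N₂` or `2 * N₂`
  have hN2 : N = N₂ ∨ N = 2 * N₂ := by
    obtain ⟨k, hk⟩ := id hdvd
    rcases Nat.even_or_odd k with hke | hko
    · obtain ⟨j, hj⟩ := hke
      rcases Nat.even_or_odd j with hje | hjo
      · exfalso
        obtain ⟨i, hi⟩ := hje
        exact h4 ⟨N₂ * i, by rw [hk, hj, hi]; ring⟩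
      · right
        have hoddNj : Odd (N₂ * j) := hodd.mul hjo
        have hdvdNj : N₂ * j ∣ N := ⟨2, by rw [hk, hj]; ring⟩
        obtain ⟨t, ht⟩ := hmax _ hoddNj hdvdNj
        have h1 : N₂ * (j * t) = N₂ * 1 := by rw [mul_one, ← mul_assoc]; exact ht.symm
        have hjt : j * t = 1 := Nat.eq_of_mul_eq_mul_left hN₂pos h1
        have hj1 : j = 1 := by
          obtain ⟨u, hu⟩ := hjo
          have h2 := Nat.le_of_dvd one_pos ⟨t, hjt.symm⟩
          omega
        rw [hk, hj, hj1]; ring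
    · left
      have hoddN : Odd N := by rw [hk]; exact hodd.mul hko
      exact Nat.dvd_antisymm (hmax N hoddN dvd_rfl) hdvd
  constructor
  · intro H
    obtain ⟨b, hb⟩ : ∃ b : ℕ, 8 * N₂ * (2 * N₂ + 1) = 4 * N * b := by
      rcases hN2 with h | h
      · exact ⟨2 * (2 * N₂ + 1), by rw [h]; ring⟩
      · exact ⟨2 * N₂ + 1, by rw [h]; ring⟩
    have hbz : (8 * N₂ * (2 * N₂ + 1) : ℤ) = 4 * N * b := by exact_mod_cast hb
    set A : SL(2, ℤ) := ⟨!![(4 * N₂ + 1 : ℤ), (b : ℤ); (4 * N : ℤ), (4 * N₂ + 1 : ℤ)], by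
      rw [Matrix.det_fin_two_of]; push_cast; linear_combination hbz⟩ with hA
    have hA00 : A 0 0 = (4 * N₂ + 1 : ℤ) := rfl
    have hA10 : A 1 0 = (4 * N : ℤ) := rfl
    have hA11 : A 1 1 = (4 * N₂ + 1 : ℤ) := rfl
    have hmem : A ∈ Gamma0 (4 * N) ⊓ Gamma1 (4 * N₂) := by
      rw [Subgroup.mem_inf]
      constructor
      · rw [Gamma0_mem, hA10]
        rw [ZMod.intCast_zmod_eq_zero_iff_dvd]
        exact ⟨1, by push_cast; ring⟩
      · rw [Gamma1_mem, hA00, hA10, hA11]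
        refine ⟨?_, ?_, ?_⟩
        · rw [show (1 : ZMod (4 * N₂)) = ((1 : ℤ) : ZMod (4 * N₂)) by norm_num,
            ZMod.intCast_eq_intCast_iff, Int.modEq_iff_dvd]
          exact ⟨-1, by push_cast; ring⟩
        · rw [show (1 : ZMod (4 * N₂)) = ((1 : ℤ) : ZMod (4 * N₂)) by norm_num,
            ZMod.intCast_eq_intCast_iff, Int.modEq_iff_dvd]
          exact ⟨-1, by push_cast; ring⟩
        · rw [ZMod.intCast_zmod_eq_zero_iff_dvd]
          obtain ⟨k, hk⟩ := hdvd
          exact ⟨(k : ℤ), by push_cast [hk]; ring⟩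
    have h1 := H A hmem
    rw [hA11, hfact] at h1
    have hχ1 : ((4 * N₂ + 1 : ℤ) : ZMod N₂) = 1 := by
      rw [show (1 : ZMod N₂) = ((1 : ℤ) : ZMod N₂) by norm_num, ZMod.intCast_eq_intCast_iff,
        Int.modEq_iff_dvd]
      exact ⟨-4, by push_cast; ring⟩
    have hω5 : ((4 * N₂ + 1 : ℤ) : ZMod 8) = 5 := by
      obtain ⟨m, hm⟩ := hodd
      rw [show (5 : ZMod 8) = ((5 : ℤ) : ZMod 8) by norm_num, ZMod.intCast_eq_intCast_iff,
        Int.modEq_iff_dvd]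
      exact ⟨-m, by push_cast [hm]; ring⟩
    rw [hχ1, hω5, map_one, mul_one] at h1
    exact h1
  · intro h5 A hA
    rw [Subgroup.mem_inf] at hA
    obtain ⟨hA0, hA1⟩ := hA
    rw [Gamma1_mem] at hA1
    obtain ⟨-, hd1, -⟩ := hA1
    set d : ℤ := A 1 1 with hd
    have hdvd1 : ((4 * N₂ : ℕ) : ℤ) ∣ 1 - d := by
      refine Int.modEq_iff_dvd.mp ?_
      refine (ZMod.intCast_eq_intCast_iff d 1 (4 * N₂)).mp ?_
      rw [hd1]; norm_num
    have h4d : (4 : ℤ) ∣ 1 - d := dvd_trans ⟨(N₂ : ℤ), by push_cast; ring⟩ hdvd1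
    have hN₂d : ((N₂ : ℕ) : ℤ) ∣ 1 - d := dvd_trans ⟨4, by push_cast; ring⟩ hdvd1
    rw [hfact]
    have hχ1 : (d : ZMod N₂) = 1 := by
      rw [show (1 : ZMod N₂) = ((1 : ℤ) : ZMod N₂) by norm_num, ZMod.intCast_eq_intCast_iff,
        Int.modEq_iff_dvd]
      exact hN₂d
    rw [hχ1, map_one, mul_one]
    obtain ⟨k, hk⟩ := h4d
    rcases Int.even_or_odd k with ⟨j, hj⟩ | ⟨j, hj⟩
    · have : (d : ZMod 8) = 1 := by
        rw [show (1 : ZMod 8) = ((1 : ℤ) : ZMod 8) by norm_num, ZMod.intCast_eq_intCast_iff,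
          Int.modEq_iff_dvd]
        exact ⟨j, by omega⟩
      rw [this, map_one]
    · have : (d : ZMod 8) = 5 := by
        rw [show (5 : ZMod 8) = ((5 : ℤ) : ZMod 8) by norm_num, ZMod.intCast_eq_intCast_iff,
          Int.modEq_iff_dvd]
        exact ⟨j + 1, by omega⟩
      rw [this]
      exact h5
end

section
/- For a character χ modulo N, define ω_χ(d) = (4χ(-1)/d)·χ(d), a character modulo 4N. If 4 | N, then every even character ω modulo N can be written as ω_χ in exactly two ways: with χ = ω (even) and with χ(d) = ω(d)(-1/d) (odd). If 4 ∤ N, the character χ with ω = ω_χ is unique. -/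
private lemma coprime_four_of_odd {d : ℕ} (hd : Odd d) : Nat.Coprime d 4 := by
  have h2 : Nat.Coprime d 2 := by
    have : ¬ 2 ∣ d := by rw [Nat.odd_iff] at hd; omega
    exact Nat.coprime_comm.mp (Nat.prime_two.coprime_iff_not_dvd.mpr this)
  have := h2.pow_right 2
  norm_num at this
  exact this

private lemma j4 {d : ℕ} (hd : Odd d) : jacobiSym 4 d = 1 := by
  have h2 : Nat.Coprime 2 d := by
    have : ¬ 2 ∣ d := by rw [Nat.odd_iff] at hd; omega
    exact Nat.prime_two.coprime_iff_not_dvd.mpr this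
  have hg : (2:ℤ).gcd d = 1 := by simpa [Int.gcd] using h2
  rw [show (4:ℤ) = 2^2 by norm_num]
  exact jacobiSym.sq_one' hg

private lemma jneg4 {d : ℕ} (hd : Odd d) : jacobiSym (-4) d = jacobiSym (-1) d := by
  rw [show (-4:ℤ) = -1 * 4 by norm_num, jacobiSym.mul_left, j4 hd, mul_one]

private lemma jsq {a : ℤ} (ha : a = 4 ∨ a = -4 ∨ a = -1) {d : ℕ} (hd : Odd d) :
    jacobiSym a d * jacobiSym a d = 1 := by
  have h4 : Nat.Coprime 4 d := (coprime_four_of_odd hd).symm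
  have hg : a.gcd d = 1 := by
    rcases ha with rfl | rfl | rfl
    · simpa [Int.gcd] using h4
    · simpa [Int.gcd] using h4
    · simp [Int.gcd]
  have := jacobiSym.sq_one hg
  rwa [sq] at this

private lemma jmod1 {a : ℤ} (ha : a = 4 ∨ a = -4) {d : ℕ} (hd : d % 4 = 1) :
    jacobiSym a d = 1 := by
  have hodd : Odd d := by rw [Nat.odd_iff]; omega
  rcases ha with rfl | rfl
  · exact j4 hodd
  · rw [jneg4 hodd, jacobiSym.at_neg_one hodd, ZMod.χ₄_nat_one_mod_four hd]

private lemma changeLevel_natCast {n m : ℕ} [NeZero m] (h : n ∣ m) (χ : DirichletCharacter ℂ n)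
    {d : ℕ} (hd : Nat.Coprime d m) :
    (DirichletCharacter.changeLevel h χ) ((d : ℕ) : ZMod m) = χ ((d : ℕ) : ZMod n) := by
  have hu : IsUnit ((d : ZMod m)) := (ZMod.isUnit_iff_coprime d m).mpr hd
  rw [← hu.unit_spec, DirichletCharacter.changeLevel_eq_cast_of_dvd χ h hu.unit, hu.unit_spec,
    ZMod.cast_natCast h]

private lemma changeLevel_neg_one {n m : ℕ} [NeZero m] (h : n ∣ m) (χ : DirichletCharacter ℂ n) :
    (DirichletCharacter.changeLevel h χ) (-1) = χ (-1) := by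
  have h1 : ((-1 : (ZMod m)ˣ) : ZMod m) = -1 := by simp
  rw [← h1, DirichletCharacter.changeLevel_eq_cast_of_dvd, h1]
  congr 1
  rw [show ((-1 : ZMod m)) = -(1 : ZMod m) by ring, ZMod.cast_neg h, ZMod.cast_one h]

private lemma coefsq {N : ℕ} (χ : DirichletCharacter ℂ N) {d : ℕ} (hd : Odd d) :
    ((jacobiSym (if χ (-1) = 1 then 4 else -4) d : ℤ) : ℂ) *
      ((jacobiSym (if χ (-1) = 1 then 4 else -4) d : ℤ) : ℂ) = 1 := by
  rw [← Int.cast_mul, jsq (by split_ifs <;> norm_num) hd, Int.cast_one]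

private lemma odd_of_coprime_four {d N : ℕ} (h4 : 4 ∣ N) (hd : Nat.Coprime d N) : Odd d := by
  have h2 : Nat.Coprime d 2 := hd.coprime_dvd_right (dvd_trans (by norm_num) h4)
  rw [Nat.odd_iff]
  rcases Nat.even_or_odd d with he | ho
  · exfalso
    have : (2 : ℕ) ∣ Nat.gcd d 2 := Nat.dvd_gcd he.two_dvd dvd_rfl
    rw [h2] at this; omega
  · rwa [Nat.odd_iff] at ho

/-- For a character `χ` mod `N`, let `ω_χ(d) = (4χ(-1)/d)χ(d)` (Kronecker symbol), a character
mod `4N`.  If `4 ∣ N`, every even character `ω` mod `N` equals `ω_χ` in exactly two ways: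
with `χ = ω` (even) and with `χ(d) = ω(d)(-1/d)` (odd).  If `4 ∤ N`, the character `χ` with
`ω = ω_χ` is unique. -/
theorem omega_chi_decomposition :
    (∀ N : ℕ, 0 < N → 4 ∣ N → ∀ ω : DirichletCharacter ℂ N, ω (-1) = 1 →
      (∀ d : ℕ, Nat.Coprime d N →
        ((jacobiSym (if ω (-1) = 1 then 4 else -4) d : ℤ) : ℂ) * ω (d : ZMod N) =
          ω (d : ZMod N)) ∧
      (∃ χ : DirichletCharacter ℂ N, χ (-1) = -1 ∧
        (∀ d : ℕ, Nat.Coprime d N →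
          χ (d : ZMod N) = ω (d : ZMod N) * ((jacobiSym (-1) d : ℤ) : ℂ)) ∧
        ∀ d : ℕ, Nat.Coprime d N →
          ((jacobiSym (if χ (-1) = 1 then 4 else -4) d : ℤ) : ℂ) * χ (d : ZMod N) =
            ω (d : ZMod N)) ∧
      (∀ χ₁ χ₂ : DirichletCharacter ℂ N,
        (∀ d : ℕ, Nat.Coprime d N →
          ((jacobiSym (if χ₁ (-1) = 1 then 4 else -4) d : ℤ) : ℂ) * χ₁ (d : ZMod N) =
            ω (d : ZMod N)) →
        (∀ d : ℕ, Nat.Coprime d N →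
          ((jacobiSym (if χ₂ (-1) = 1 then 4 else -4) d : ℤ) : ℂ) * χ₂ (d : ZMod N) =
            ω (d : ZMod N)) →
        χ₁ (-1) = χ₂ (-1) → χ₁ = χ₂)) ∧
    (∀ N : ℕ, 0 < N → ¬ 4 ∣ N → ∀ χ₁ χ₂ : DirichletCharacter ℂ N,
      (∀ d : ℕ, Nat.Coprime d (4 * N) →
        ((jacobiSym (if χ₁ (-1) = 1 then 4 else -4) d : ℤ) : ℂ) * χ₁ (d : ZMod N) =
          ((jacobiSym (if χ₂ (-1) = 1 then 4 else -4) d : ℤ) : ℂ) * χ₂ (d : ZMod N)) →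
      χ₁ = χ₂) := by
  constructor
  · intro N hN h4 ω hω
    have hNz : NeZero N := ⟨hN.ne'⟩
    refine ⟨?_, ?_, ?_⟩
    · -- part (a)
      intro d hd
      rw [if_pos hω, j4 (odd_of_coprime_four h4 hd)]
      norm_num
    · -- part (b) existence of odd χ
      set ψ : DirichletCharacter ℂ N :=
        DirichletCharacter.changeLevel h4 (ZMod.χ₄.ringHomComp (Int.castRingHom ℂ)) with hψ
      have hψneg : ψ (-1) = -1 := by
        rw [hψ, changeLevel_neg_one, MulChar.ringHomComp_apply]
        have : ((-1 : ZMod 4)) = ((3 : ℕ) : ZMod 4) := by decide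
        rw [this, ZMod.χ₄_nat_three_mod_four (by norm_num)]
        norm_num
      have hψval : ∀ d : ℕ, Nat.Coprime d N →
          ψ ((d : ℕ) : ZMod N) = ((jacobiSym (-1) d : ℤ) : ℂ) := by
        intro d hd
        rw [hψ, changeLevel_natCast h4 _ hd, MulChar.ringHomComp_apply,
          jacobiSym.at_neg_one (odd_of_coprime_four h4 hd)]
        simp
      refine ⟨ω * ψ, ?_, ?_, ?_⟩
      · rw [MulChar.mul_apply, hω, hψneg, one_mul]
      · intro d hd
        rw [MulChar.mul_apply, hψval d hd]
      · intro d hd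
        have hodd := odd_of_coprime_four h4 hd
        have hneg : (ω * ψ) (-1) = -1 := by rw [MulChar.mul_apply, hω, hψneg, one_mul]
        rw [hneg, if_neg (by norm_num), jneg4 hodd, MulChar.mul_apply, hψval d hd]
        have hsq : ((jacobiSym (-1) d : ℤ) : ℂ) * ((jacobiSym (-1) d : ℤ) : ℂ) = 1 := by
          rw [← Int.cast_mul, jsq (by norm_num) hodd, Int.cast_one]
        calc ((jacobiSym (-1) d : ℤ) : ℂ) * (ω (d : ZMod N) * ((jacobiSym (-1) d : ℤ) : ℂ))
            = (((jacobiSym (-1) d : ℤ) : ℂ) * ((jacobiSym (-1) d : ℤ) : ℂ)) * ω (d : ZMod N) := by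
              ring
          _ = ω (d : ZMod N) := by rw [hsq, one_mul]
    · -- part (c) uniqueness given parity
      intro χ₁ χ₂ h1 h2 hpar
      apply MulChar.ext
      intro a
      set d : ℕ := ((a : ZMod N)).val with hdd
      have hd : Nat.Coprime d N := ZMod.val_coe_unit_coprime a
      have hodd := odd_of_coprime_four h4 hd
      have e1 := h1 d hd
      have e2 := h2 d hd
      rw [hpar] at e1
      have hc0 : ((jacobiSym (if χ₂ (-1) = 1 then 4 else -4) d : ℤ) : ℂ) ≠ 0 :=
        left_ne_zero_of_mul_eq_one (coefsq χ₂ hodd)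
      have := mul_left_cancel₀ hc0 (e1.trans e2.symm)
      rwa [hdd, ZMod.natCast_val, ZMod.cast_id] at this
  · -- part 2: uniqueness when ¬ 4 ∣ N
    intro N hN h4 χ₁ χ₂ hcomb
    have hNz : NeZero N := ⟨hN.ne'⟩
    -- step 1: equal parity
    have hpar : χ₁ (-1) = χ₂ (-1) := by
      obtain ⟨d, hd4, k, hdN⟩ : ∃ d : ℕ, d % 4 = 1 ∧ ∃ k, d + 1 = k * N := by
        have hm : N % 4 = 1 ∨ N % 4 = 2 ∨ N % 4 = 3 := by omega
        rcases hm with h | h | h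
        · exact ⟨2 * N - 1, by omega, 2, by omega⟩
        · exact ⟨N - 1, by omega, 1, by omega⟩
        · exact ⟨2 * N - 1, by omega, 2, by omega⟩
      have hdneg : ((d : ℕ) : ZMod N) = -1 := by
        have h0 : (((d + 1 : ℕ)) : ZMod N) = 0 :=
          (ZMod.natCast_eq_zero_iff _ _).mpr ⟨k, by rw [hdN, Nat.mul_comm]⟩
        push_cast at h0
        exact eq_neg_of_add_eq_zero_left h0
      have hodd : Odd d := by rw [Nat.odd_iff]; omega
      have hcN : Nat.Coprime d N := by
        have hu : IsUnit ((d : ZMod N)) := by rw [hdneg]; exact isUnit_one.neg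
        exact (ZMod.isUnit_iff_coprime d N).mp hu
      have hc : Nat.Coprime d (4 * N) := (coprime_four_of_odd hodd).mul_right hcN
      have h := hcomb d hc
      rw [jmod1 (a := if χ₁ (-1) = 1 then 4 else -4) (by split_ifs <;> norm_num) hd4,
        jmod1 (a := if χ₂ (-1) = 1 then 4 else -4) (by split_ifs <;> norm_num) hd4] at h
      rw [hdneg] at h
      simpa using h
    -- step 2: all values agree
    apply MulChar.ext
    intro a
    set d₀ : ℕ := ((a : ZMod N)).val with hd₀
    have hc₀ : Nat.Coprime d₀ N := ZMod.val_coe_unit_coprime a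
    obtain ⟨d, hdodd, hcN, hcast⟩ : ∃ d : ℕ, Odd d ∧ Nat.Coprime d N ∧
        ((d : ℕ) : ZMod N) = (a : ZMod N) := by
      by_cases hodd : Odd d₀
      · exact ⟨d₀, hodd, hc₀, by rw [hd₀, ZMod.natCast_val, ZMod.cast_id]⟩
      · have he : Even d₀ := Nat.not_odd_iff_even.mp hodd
        have hNodd : Odd N := by
          rcases Nat.even_or_odd N with heN | hoN
          · exfalso
            have : (2 : ℕ) ∣ Nat.gcd d₀ N := Nat.dvd_gcd he.two_dvd heN.two_dvd
            rw [hc₀] at this; omega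
          · exact hoN
        refine ⟨d₀ + N, he.add_odd hNodd, Nat.coprime_add_self_left.mpr hc₀, ?_⟩
        push_cast
        rw [ZMod.natCast_self, add_zero, hd₀, ZMod.natCast_val, ZMod.cast_id]
    have h := hcomb d ((coprime_four_of_odd hdodd).mul_right hcN)
    rw [hpar] at h
    have hc0 : ((jacobiSym (if χ₂ (-1) = 1 then 4 else -4) d : ℤ) : ℂ) ≠ 0 :=
      left_ne_zero_of_mul_eq_one (coefsq χ₂ hdodd)
    have := mul_left_cancel₀ hc0 h
    rwa [hcast] at this
end

section
/- With A₀ = ((1/2, 0; 0, 2), √2) and A₁ = ((1/2, 1; 0, 2), √2) in Mp₂(R), and R = ((1 0;1 1), √(τ+1)), one has A₀ R A₀⁻¹ = R⁴ and A₁ R A₁⁻¹ = T R⁻⁴ Z, where T = ((1 1;0 1),1) and Z = (−I, i). -/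
/-! The lifts `L x = ((1 0; x 1), √(xτ + 1))` satisfy `L x L y = L (x + y)` for `x, y ≥ 0`:
the automorphy factors `xσ + 1` involved all lie in the closed upper half plane, where principal
square roots multiply. Hence `R⁴ = L 4`, and the first identity is the conjugation of `L 1` by the
diagonal element `A₀`. With `N b = ((1 b; 0 1), 1)` one has `A₁ = N (1/2) A₀` and
`T⁻¹ A₁ = N (-1/2) A₀`, so the second identity reduces to the lift
`L x N (-2/x) L x = Z N (2/x)` (`x > 0`) of a relation in `SL₂(ℝ)`; its automorphy factor is
`√(-1/w) √w = i` for `w = xτ + 1 ∈ ℍ`. -/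

open scoped MatrixGroups UpperHalfPlane

/-- Elements of the real metaplectic group: a matrix in `SL₂(ℝ)` together with a function
`ℍ → ℂ`. -/
abbrev MpRPair : Type := SL(2, ℝ) × (ℍ → ℂ)

/-- Multiplication `(α,φ)(β,ψ) = (αβ, φ(βτ)ψ(τ))` of metaplectic pairs over `ℝ`. -/
noncomputable def mpRMul (p q : MpRPair) : MpRPair :=
  (p.1 * q.1, fun τ => p.2 (q.1 • τ) * q.2 τ)

open Complex Set

namespace Complex

theorem mul_cpow_of_arg_add_mem_Ioc {x y : ℂ} (hx : x ≠ 0) (hy : y ≠ 0)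
    (h : arg x + arg y ∈ Ioc (-Real.pi) Real.pi) (s : ℂ) : (x * y) ^ s = x ^ s * y ^ s := by
  rw [cpow_def_of_ne_zero (mul_ne_zero hx hy), cpow_def_of_ne_zero hx, cpow_def_of_ne_zero hy,
    log_mul hx hy h, add_mul, exp_add]

theorem arg_mem_Ico_of_mem_slitPlane {z : ℂ} (hz : z ∈ slitPlane) (him : 0 ≤ z.im) :
    arg z ∈ Ico 0 Real.pi :=
  ⟨arg_nonneg_iff.2 him, (arg_le_pi z).lt_of_ne (slitPlane_arg_ne_pi hz)⟩

theorem div_cpow_mul_cpow_of_im_nonneg {w z : ℂ} (hw : w ∈ slitPlane) (hz : z ∈ slitPlane)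
    (hw' : 0 ≤ w.im) (hz' : 0 ≤ z.im) (s : ℂ) : (w / z) ^ s * z ^ s = w ^ s := by
  have hw0 := slitPlane_ne_zero hw
  have hz0 := slitPlane_ne_zero hz
  obtain ⟨hw₁, hw₂⟩ := arg_mem_Ico_of_mem_slitPlane hw hw'
  obtain ⟨hz₁, hz₂⟩ := arg_mem_Ico_of_mem_slitPlane hz hz'
  have harg_inv : arg z⁻¹ = -arg z := by rw [arg_inv, if_neg (slitPlane_arg_ne_pi hz)]
  have hmem : arg w + arg z⁻¹ ∈ Ioc (-Real.pi) Real.pi := by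
    rw [harg_inv]; constructor <;> linarith
  have harg : arg (w / z) = arg w - arg z := by
    rw [div_eq_mul_inv, arg_mul hw0 (inv_ne_zero hz0) hmem, harg_inv, sub_eq_add_neg]
  rw [← mul_cpow_of_arg_add_mem_Ioc (div_ne_zero hw0 hz0) hz0
    (by rw [harg]; constructor <;> linarith), div_mul_cancel₀ w hz0]

theorem neg_inv_cpow_half_mul_cpow_half_of_im_pos {w : ℂ} (hw : 0 < w.im) :
    (-w⁻¹) ^ (1 / 2 : ℂ) * w ^ (1 / 2 : ℂ) = I := by
  have hw0 : w ≠ 0 := fun h => by simp [h] at hw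
  have harg : arg (-w⁻¹) = Real.pi - arg w := by
    have him : w⁻¹.im < 0 := by
      simpa using div_neg_of_neg_of_pos (neg_neg_of_pos hw) (normSq_pos.2 hw0)
    rw [arg_neg_eq_arg_add_pi_of_im_neg him, arg_inv,
      if_neg (fun h => hw.ne' (arg_eq_pi_iff.1 h).2)]
    ring
  rw [← mul_cpow_of_arg_add_mem_Ioc (neg_ne_zero.2 (inv_ne_zero hw0)) hw0
    (by rw [harg]; constructor <;> linarith [Real.pi_pos]), neg_mul, inv_mul_cancel₀ hw0,
    cpow_def_of_ne_zero (by norm_num), log_neg_one,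
    show (Real.pi : ℂ) * I * (1 / 2) = Real.pi / 2 * I by ring, exp_pi_div_two_mul_I]

end Complex

theorem UpperHalfPlane.ofReal_mul_coe_add_one_mem_slitPlane {x : ℝ} (hx : 0 ≤ x) (τ : ℍ) :
    (x * (τ : ℂ) + 1) ∈ slitPlane := by
  rcases hx.eq_or_lt with rfl | hx
  · simp
  · exact mem_slitPlane_iff.2 (Or.inr (by simpa using (mul_pos hx τ.im_pos).ne'))

theorem mpRMul_fst (p q : MpRPair) : (mpRMul p q).1 = p.1 * q.1 := rfl

theorem mpRMul_snd_apply (p q : MpRPair) (τ : ℍ) :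
    (mpRMul p q).2 τ = p.2 (q.1 • τ) * q.2 τ := rfl

theorem mpRMul_assoc (p q r : MpRPair) : mpRMul (mpRMul p q) r = mpRMul p (mpRMul q r) :=
  Prod.ext (mul_assoc _ _ _) (funext fun τ => by simp only [mpRMul, mul_smul, mul_assoc])

namespace MpRPair

noncomputable def lowerUnipotent (x : ℝ) : MpRPair :=
  (⟨!![1, 0; x, 1], by simp [Matrix.det_fin_two_of]⟩,
    fun τ => (x * (τ : ℂ) + 1) ^ (1 / 2 : ℂ))

def upperUnipotent (b : ℝ) : MpRPair :=
  (⟨!![1, b; 0, 1], by simp [Matrix.det_fin_two_of]⟩, fun _ => 1)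

def diagonal (a d : ℝ) (had : a * d = 1) (c : ℂ) : MpRPair :=
  (⟨!![a, 0; 0, d], by simp [Matrix.det_fin_two_of, had]⟩, fun _ => c)

def negOneI : MpRPair :=
  (⟨!![-1, 0; 0, -1], by norm_num [Matrix.det_fin_two_of]⟩, fun _ => I)

theorem coe_lowerUnipotent (x : ℝ) :
    ((lowerUnipotent x).1 : Matrix (Fin 2) (Fin 2) ℝ) = !![1, 0; x, 1] := rfl

theorem coe_upperUnipotent (b : ℝ) :
    ((upperUnipotent b).1 : Matrix (Fin 2) (Fin 2) ℝ) = !![1, b; 0, 1] := rfl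

theorem coe_diagonal (a d : ℝ) (had : a * d = 1) (c : ℂ) :
    ((diagonal a d had c).1 : Matrix (Fin 2) (Fin 2) ℝ) = !![a, 0; 0, d] := rfl

theorem coe_negOneI : (negOneI.1 : Matrix (Fin 2) (Fin 2) ℝ) = !![-1, 0; 0, -1] := rfl

theorem lowerUnipotent_snd_apply (x : ℝ) (τ : ℍ) :
    (lowerUnipotent x).2 τ = (x * (τ : ℂ) + 1) ^ (1 / 2 : ℂ) := rfl

theorem upperUnipotent_snd_apply (b : ℝ) (τ : ℍ) : (upperUnipotent b).2 τ = 1 := rfl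

theorem diagonal_snd_apply (a d : ℝ) (had : a * d = 1) (c : ℂ) (τ : ℍ) :
    (diagonal a d had c).2 τ = c := rfl

theorem negOneI_snd_apply (τ : ℍ) : negOneI.2 τ = I := rfl

theorem coe_lowerUnipotent_smul (x : ℝ) (τ : ℍ) :
    (((lowerUnipotent x).1 • τ : ℍ) : ℂ) = τ / (x * τ + 1) := by
  rw [UpperHalfPlane.coe_specialLinearGroup_apply]; simp [lowerUnipotent]

theorem coe_upperUnipotent_smul (b : ℝ) (τ : ℍ) :
    (((upperUnipotent b).1 • τ : ℍ) : ℂ) = τ + b := by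
  rw [UpperHalfPlane.coe_specialLinearGroup_apply]; simp [upperUnipotent]

theorem coe_diagonal_smul (a d : ℝ) (had : a * d = 1) (c : ℂ) (τ : ℍ) :
    (((diagonal a d had c).1 • τ : ℍ) : ℂ) = a * τ / d := by
  rw [UpperHalfPlane.coe_specialLinearGroup_apply]; simp [diagonal]

theorem mpRMul_lowerUnipotent {x y : ℝ} (hx : 0 ≤ x) (hy : 0 ≤ y) :
    mpRMul (lowerUnipotent x) (lowerUnipotent y) = lowerUnipotent (x + y) := by
  refine Prod.ext (Subtype.ext ?_) (funext fun τ => ?_)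
  · simp [mpRMul, coe_lowerUnipotent]
  · have hxy := add_nonneg hx hy
    have hy0 : (y * (τ : ℂ) + 1) ≠ 0 :=
      slitPlane_ne_zero (UpperHalfPlane.ofReal_mul_coe_add_one_mem_slitPlane hy τ)
    have hquot :
        (x : ℂ) * (τ / (y * τ + 1)) + 1 = ((x + y : ℝ) * (τ : ℂ) + 1) / (y * τ + 1) := by
      rw [mul_div_assoc', div_add_one hy0]; push_cast; ring
    simp only [mpRMul_snd_apply, lowerUnipotent_snd_apply, coe_lowerUnipotent_smul, hquot]
    exact div_cpow_mul_cpow_of_im_nonneg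
      (UpperHalfPlane.ofReal_mul_coe_add_one_mem_slitPlane hxy τ)
      (UpperHalfPlane.ofReal_mul_coe_add_one_mem_slitPlane hy τ)
      (by simpa using mul_nonneg hxy τ.im_pos.le) (by simpa using mul_nonneg hy τ.im_pos.le) _

theorem mpRMul_upperUnipotent (a b : ℝ) :
    mpRMul (upperUnipotent a) (upperUnipotent b) = upperUnipotent (a + b) :=
  Prod.ext (Subtype.ext (by simp [mpRMul, coe_upperUnipotent, add_comm]))
    (funext fun _ => mul_one 1)

theorem mpRMul_diagonal_lowerUnipotent (a d : ℝ) (had : a * d = 1) (c : ℂ) (x : ℝ) :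
    mpRMul (diagonal a d had c) (lowerUnipotent x) =
      mpRMul (lowerUnipotent (d ^ 2 * x)) (diagonal a d had c) := by
  refine Prod.ext (Subtype.ext ?_) (funext fun τ => ?_)
  · have hentry : d ^ 2 * x * a = d * x := by linear_combination (d * x) * had
    simp [mpRMul, coe_lowerUnipotent, coe_diagonal, hentry]
  · have hadC : (a : ℂ) * d = 1 := by exact_mod_cast had
    have hj : ((d ^ 2 * x : ℝ) : ℂ) * (a * τ / d) + 1 = x * τ + 1 := by
      push_cast; field_simp; linear_combination (x * τ) * hadC
    simp only [mpRMul_snd_apply, lowerUnipotent_snd_apply, coe_diagonal_smul, diagonal_snd_apply,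
      hj]
    exact mul_comm _ _

theorem mpRMul_lowerUnipotent_upperUnipotent_lowerUnipotent {x : ℝ} (hx : 0 < x) :
    mpRMul (lowerUnipotent x) (mpRMul (upperUnipotent (-2 / x)) (lowerUnipotent x)) =
      mpRMul negOneI (upperUnipotent (2 / x)) := by
  refine Prod.ext (Subtype.ext ?_) (funext fun τ => ?_)
  · norm_num [mpRMul, coe_lowerUnipotent, coe_upperUnipotent, coe_negOneI, hx.ne', neg_div,
      mul_div_cancel₀]
  · have hx0 : (x : ℂ) ≠ 0 := ofReal_ne_zero.2 hx.ne'
    have hj0 : (x * (τ : ℂ) + 1) ≠ 0 :=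
      slitPlane_ne_zero (UpperHalfPlane.ofReal_mul_coe_add_one_mem_slitPlane hx.le τ)
    have hj :
        (x : ℂ) * (τ / (x * τ + 1) + ((-2 / x : ℝ) : ℂ)) + 1 =
          -((x : ℂ) * τ + 1)⁻¹ := by
      push_cast; field_simp; ring
    simp only [mpRMul_snd_apply, lowerUnipotent_snd_apply, upperUnipotent_snd_apply,
      negOneI_snd_apply, mpRMul_fst, mul_smul, coe_upperUnipotent_smul, coe_lowerUnipotent_smul,
      mul_one, one_mul, hj]
    exact neg_inv_cpow_half_mul_cpow_half_of_im_pos (by simpa using mul_pos hx τ.im_pos)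

end MpRPair

open MpRPair

/-- With `A₀ = ((1/2,0;0,2), √2)`, `A₁ = ((1/2,1;0,2), √2)` and `R = ((1 0;1 1), √(τ+1))`
in `Mp₂(ℝ)`, one has `A₀ R A₀⁻¹ = R⁴` and `A₁ R A₁⁻¹ = T R⁻⁴ Z`, with `T = ((1 1;0 1),1)`
and `Z = (−I, i)`; the two identities are stated in the equivalent product forms
`A₀ R = R⁴ A₀` and `R⁴ T⁻¹ A₁ R = Z A₁`. -/
theorem mp2R_conjugation :
    let A₀ : MpRPair := (⟨!![1 / 2, 0; 0, 2], by norm_num [Matrix.det_fin_two_of]⟩,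
      fun _ => (Real.sqrt 2 : ℂ))
    let A₁ : MpRPair := (⟨!![1 / 2, 1; 0, 2], by norm_num [Matrix.det_fin_two_of]⟩,
      fun _ => (Real.sqrt 2 : ℂ))
    let R : MpRPair := (⟨!![1, 0; 1, 1], by norm_num [Matrix.det_fin_two_of]⟩,
      fun τ => ((τ : ℂ) + 1) ^ (1 / 2 : ℂ))
    let Tinv : MpRPair := (⟨!![1, -1; 0, 1], by norm_num [Matrix.det_fin_two_of]⟩, fun _ => 1)
    let Z : MpRPair := (⟨!![-1, 0; 0, -1], by norm_num [Matrix.det_fin_two_of]⟩,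
      fun _ => Complex.I)
    let R4 : MpRPair := mpRMul R (mpRMul R (mpRMul R R))
    -- `A₀ R A₀⁻¹ = R⁴`:
    mpRMul A₀ R = mpRMul R4 A₀ ∧
    -- `A₁ R A₁⁻¹ = T R⁻⁴ Z`:
    mpRMul (mpRMul R4 (mpRMul Tinv A₁)) R = mpRMul Z A₁ := by
  intro A₀ A₁ R Tinv Z R4
  have hA₀ : A₀ = diagonal (1 / 2) 2 (by norm_num) (Real.sqrt 2) := rfl
  have hR : R = lowerUnipotent 1 :=
    Prod.ext rfl (funext fun τ => by simp [R, lowerUnipotent_snd_apply])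
  have hR4 : R4 = lowerUnipotent 4 := by
    simp only [R4, hR]
    rw [mpRMul_lowerUnipotent zero_le_one zero_le_one,
      mpRMul_lowerUnipotent zero_le_one (by norm_num),
      mpRMul_lowerUnipotent zero_le_one (by norm_num)]
    norm_num
  have hconj : mpRMul A₀ R = mpRMul R4 A₀ := by
    rw [hR4, hR, hA₀, mpRMul_diagonal_lowerUnipotent]; norm_num
  have hA₁ : mpRMul (upperUnipotent (1 / 2)) A₀ = A₁ := by
    refine Prod.ext (Subtype.ext ?_) (funext fun τ => ?_)
    · simp [mpRMul, hA₀, coe_upperUnipotent, coe_diagonal, A₁]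
    · simp [mpRMul_snd_apply, upperUnipotent_snd_apply, A₀, A₁]
  have hTA : mpRMul Tinv A₁ = mpRMul (upperUnipotent (-2 / 4)) A₀ := by
    rw [← hA₁, ← mpRMul_assoc, show Tinv = upperUnipotent (-1) from rfl,
      mpRMul_upperUnipotent]
    norm_num
  refine ⟨hconj, ?_⟩
  calc mpRMul (mpRMul R4 (mpRMul Tinv A₁)) R
      = mpRMul (mpRMul R4 (mpRMul (upperUnipotent (-2 / 4)) R4)) A₀ := by
        simp only [hTA, mpRMul_assoc, hconj]
    _ = mpRMul (mpRMul negOneI (upperUnipotent (2 / 4))) A₀ := by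
        rw [hR4, mpRMul_lowerUnipotent_upperUnipotent_lowerUnipotent four_pos]
    _ = mpRMul Z A₁ := by
        rw [mpRMul_assoc, show (2 : ℝ) / 4 = 1 / 2 by norm_num, hA₁]
        rfl
end
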